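/- Let p_θ(x) = 1_{[θ,θ+1]}(x) be the density of the uniform law on [θ,θ+1], and let ψ : [0,+∞] → [−1,1] be any function with ψ(0) = −1, ψ(1) = 0 and ψ(+∞) = 1 (ratios computed with the conventions 0/0 = 1 and a/0 = +∞ for a > 0). Then for all θ, θ', x ∈ ℝ: ψ(√(p_{θ'}(x)/p_θ(x))) = 1_{[θ',θ'+1]}(x) − 1_{[θ,θ+1]}(x). Consequently, for any observations X₁,…,Xₙ, sup_{θ'∈ℝ} Σ_{i=1}^n ψ(√(p_{θ'}(X_i)/p_θ(X_i))) = [sup_{θ'∈ℝ} Σ_{i=1}^n 1_{[θ',θ'+1]}(X_i)] − Σ_{i=1}^n 1_{[θ,θ+1]}(X_i), so that the ρ-estimators on this model are exactly the maximizers of θ ↦ Σ_{i=1}^n 1_{[θ,θ+1]}(X_i). -/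

import Mathlib

open MeasureTheory ENNReal

/-- The density (in `[0,+∞]`) of the uniform law on `[θ, θ+1]`. -/
noncomputable def unifDens (θ x : ℝ) : ℝ≥0∞ :=
  Set.indicator (Set.Icc θ (θ + 1)) 1 x

open Classical in
/-- The ratio `p_{θ'}(x)/p_θ(x)` in `[0,+∞]`, with the conventions `0/0 = 1` and
`a/0 = +∞` for `a > 0` (the latter being automatic in `ℝ≥0∞`). -/
noncomputable def unifRatio (θ' θ x : ℝ) : ℝ≥0∞ :=
  if unifDens θ' x = 0 ∧ unifDens θ x = 0 then 1 else unifDens θ' x / unifDens θ x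

/-! On the uniform model the ratio `p_{θ'}(x)/p_θ(x)` only takes the values `0`, `1` and `+∞`, where
`ψ ∘ √·` is pinned down, so each summand is a difference of two indicators. Hence the supremum over
`θ'` is the (finite, at most `n`) maximal count minus the count at `θ`, and minimising it in `θ`
amounts to maximising the count. -/

theorem psi_unifRatio_rpow_half {ψ : ℝ≥0∞ → ℝ} (h0 : ψ 0 = -1) (h1 : ψ 1 = 0) (htop : ψ ⊤ = 1)
    (θ θ' x : ℝ) :
    ψ (unifRatio θ' θ x ^ ((1:ℝ)/2)) =
      Set.indicator (Set.Icc θ' (θ' + 1)) 1 x - Set.indicator (Set.Icc θ (θ + 1)) 1 x := by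
  by_cases hx' : x ∈ Set.Icc θ' (θ' + 1) <;> by_cases hx : x ∈ Set.Icc θ (θ + 1) <;>
    simp [unifRatio, unifDens, hx, hx', h0, h1, htop]

section Count

variable {ι : Type*} [Fintype ι]

noncomputable def unifCount (X : ι → ℝ) (θ : ℝ) : ℝ :=
  ∑ i, Set.indicator (Set.Icc θ (θ + 1)) 1 (X i)

theorem unifCount_le_card (X : ι → ℝ) (θ : ℝ) : unifCount X θ ≤ Fintype.card ι := by
  calc unifCount X θ ≤ ∑ _i : ι, (1:ℝ) :=
        Finset.sum_le_sum fun i _ => Set.indicator_le_self' (fun _ _ => zero_le_one) (X i)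
    _ = Fintype.card ι := by simp

theorem bddAbove_range_unifCount (X : ι → ℝ) : BddAbove (Set.range (unifCount X)) :=
  ⟨Fintype.card ι, Set.forall_mem_range.2 (unifCount_le_card X)⟩

theorem iSup_sum_psi_unifRatio {ψ : ℝ≥0∞ → ℝ} (h0 : ψ 0 = -1) (h1 : ψ 1 = 0) (htop : ψ ⊤ = 1)
    (X : ι → ℝ) (θ : ℝ) :
    (⨆ θ' : ℝ, ∑ i, ψ (unifRatio θ' θ (X i) ^ ((1:ℝ)/2))) =
      (⨆ θ' : ℝ, unifCount X θ') - unifCount X θ := by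
  simp only [psi_unifRatio_rpow_half h0 h1 htop, Finset.sum_sub_distrib]
  exact ((OrderIso.subRight (unifCount X θ)).map_ciSup (bddAbove_range_unifCount X)).symm

end Count

theorem rho_estimator_uniform_model_is_count_maximizer
    (ψ : ℝ≥0∞ → ℝ) (h0 : ψ 0 = -1) (h1 : ψ 1 = 0) (htop : ψ ⊤ = 1)
    (n : ℕ) (X : Fin n → ℝ) :
    (∀ θ θ' x : ℝ,
      ψ ((unifRatio θ' θ x) ^ ((1:ℝ)/2)) =
        Set.indicator (Set.Icc θ' (θ' + 1)) (1 : ℝ → ℝ) x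
          - Set.indicator (Set.Icc θ (θ + 1)) (1 : ℝ → ℝ) x) ∧
    (∀ θ : ℝ,
      (⨆ θ' : ℝ, ∑ i, ψ ((unifRatio θ' θ (X i)) ^ ((1:ℝ)/2))) =
        (⨆ θ' : ℝ, ∑ i, Set.indicator (Set.Icc θ' (θ' + 1)) (1 : ℝ → ℝ) (X i))
          - ∑ i, Set.indicator (Set.Icc θ (θ + 1)) (1 : ℝ → ℝ) (X i)) ∧
    ∀ θhat : ℝ,
      ((∀ θ : ℝ,
          (⨆ θ' : ℝ, ∑ i, ψ ((unifRatio θ' θhat (X i)) ^ ((1:ℝ)/2))) ≤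
            ⨆ θ' : ℝ, ∑ i, ψ ((unifRatio θ' θ (X i)) ^ ((1:ℝ)/2))) ↔
        ∀ θ : ℝ,
          ∑ i, Set.indicator (Set.Icc θ (θ + 1)) (1 : ℝ → ℝ) (X i) ≤
            ∑ i, Set.indicator (Set.Icc θhat (θhat + 1)) (1 : ℝ → ℝ) (X i)) := by
  have sup_eq := iSup_sum_psi_unifRatio h0 h1 htop X
  refine ⟨psi_unifRatio_rpow_half h0 h1 htop, sup_eq,
    fun θhat => forall_congr' fun θ => ?_⟩
  rw [sup_eq, sup_eq]
  exact sub_le_sub_iff_left _
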